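/- Let Y_1, Y_2, … be a sequence of independent nonnegative random variables, let z > 0, and define interarrival times X_n = 1/(z + Y_1 + ⋯ + Y_n), n = 1, 2, …, with associated counting process N(t) = sup{n ≥ 0 : X_1 + ⋯ + X_n ≤ t}. If T is a DFR nonnegative random variable independent of the process, then N(T) is d-DFR. -/

import Mathlib

/-!
The interarrival times `X_n = 1/(z + Y_1 + ⋯ + Y_n)` are nonnegative and decreasing along every
path. For such a process independent of `T`, `N(T) ≥ n` iff `S_n ≤ T`, so
`P(N(T) ≥ n) = E[G(S_n)]` with `G(u) = P(T ≥ u)`. Being a left limit of the survival function,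
`G` inherits its log-convexity on `[0, ∞)`; together with `S_{n+1} - S_n ≥ S_{n+2} - S_{n+1}` this
gives `G(S_{n+1})² ≤ G(S_n) G(S_{n+2})` pathwise, and Cauchy–Schwarz turns it into
`P(N(T) ≥ n+1)² ≤ P(N(T) ≥ n) P(N(T) ≥ n+2)`.
-/

open MeasureTheory ProbabilityTheory

variable {Ω : Type*} [MeasurableSpace Ω]

/-- Survival function of a random variable `T`: `F̄_T(t) = P(T > t)`. -/
noncomputable def surv (μ : Measure Ω) (T : Ω → ℝ) (t : ℝ) : ℝ :=
  (μ {ω | t < T ω}).toReal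

/-- `T` has the decreasing failure rate (DFR) property:
`F̄_T(s+z)·F̄_T(t) ≤ F̄_T(t+z)·F̄_T(s)` for all `0 ≤ s ≤ t` and `z ≥ 0`
(log-convexity of the survival function on `[0,∞)`). -/
def IsDFR (μ : Measure Ω) (T : Ω → ℝ) : Prop :=
  ∀ s t z : ℝ, 0 ≤ s → s ≤ t → 0 ≤ z →
    μ {ω | s + z < T ω} * μ {ω | t < T ω} ≤ μ {ω | t + z < T ω} * μ {ω | s < T ω}

/-- Arrival times: `S n = X 1 + ⋯ + X n` (with 0-based indexing of the
interarrival times, `X i` is the `(i+1)`-st interarrival time), `S 0 = 0`. -/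
noncomputable def arr (X : ℕ → Ω → ℝ) (n : ℕ) (ω : Ω) : ℝ :=
  ∑ i ∈ Finset.range n, X i ω

/-- The counting process `N(t) = sup {n ≥ 0 : S n ≤ t}` (valued in `ℕ∞`,
allowing infinitely many arrivals). -/
noncomputable def countN (X : ℕ → Ω → ℝ) (t : ℝ) (ω : Ω) : ℕ∞ :=
  sSup ((fun n : ℕ => (n : ℕ∞)) '' {n : ℕ | arr X n ω ≤ t})

/-- A (possibly defective) `ℕ∞`-valued random variable `M` is discrete DFR:
`P(M ≥ n+1)² ≤ P(M ≥ n)·P(M ≥ n+2)` for all `n`. -/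
def IsdDFR (μ : Measure Ω) (M : Ω → ℕ∞) : Prop :=
  ∀ n : ℕ,
    μ {ω | (n : ℕ∞) + 1 ≤ M ω} ^ 2 ≤
      μ {ω | (n : ℕ∞) ≤ M ω} * μ {ω | (n : ℕ∞) + 2 ≤ M ω}

open Filter
open scoped ENNReal Topology

lemma lintegral_sq_le_mul_of_sq_le {α : Type*} [MeasurableSpace α] {ν : Measure α}
    {f g h : α → ℝ≥0∞} (hf : AEMeasurable f ν) (hh : AEMeasurable h ν)
    (hg : ∀ a, g a ^ 2 ≤ f a * h a) :
    (∫⁻ a, g a ∂ν) ^ 2 ≤ (∫⁻ a, f a ∂ν) * ∫⁻ a, h a ∂ν := by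
  have hsqrt : ∀ x : ℝ≥0∞, (x ^ (1 / 2 : ℝ)) ^ (2 : ℝ) = x := fun x => by
    rw [← ENNReal.rpow_mul]; norm_num
  have hgle : ∀ a, g a ≤ (f a) ^ (1 / 2 : ℝ) * (h a) ^ (1 / 2 : ℝ) := fun a => by
    rw [← ENNReal.mul_rpow_of_nonneg _ _ (by norm_num), ← ENNReal.rpow_le_rpow_iff two_pos, hsqrt,
      ENNReal.rpow_two]
    exact hg a
  have holder := ENNReal.lintegral_mul_le_Lp_mul_Lq ν Real.HolderConjugate.two_two
    (hf.pow_const (1 / 2 : ℝ)) (hh.pow_const (1 / 2 : ℝ))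
  simp only [Pi.mul_apply, hsqrt] at holder
  calc (∫⁻ a, g a ∂ν) ^ 2
      ≤ ((∫⁻ a, f a ∂ν) ^ (1 / 2 : ℝ) * (∫⁻ a, h a ∂ν) ^ (1 / 2 : ℝ)) ^ 2 :=
        pow_le_pow_left₀ zero_le ((lintegral_mono hgle).trans holder) 2
    _ = (∫⁻ a, f a ∂ν) * ∫⁻ a, h a ∂ν := by
        rw [mul_pow, ← ENNReal.rpow_two, ← ENNReal.rpow_two, hsqrt, hsqrt]

def tailProb (μ : Measure Ω) (T : Ω → ℝ) (u : ℝ) : ℝ≥0∞ :=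
  μ {ω | u ≤ T ω}

lemma tailProb_antitone (μ : Measure Ω) (T : Ω → ℝ) : Antitone (tailProb μ T) :=
  fun _ _ h => measure_mono fun _ hω => h.trans hω

lemma tailProb_le_measure_lt (μ : Measure Ω) (T : Ω → ℝ) {u v : ℝ} (h : v < u) :
    tailProb μ T u ≤ μ {ω | v < T ω} :=
  measure_mono fun _ hω => h.trans_le hω

lemma tendsto_measure_sub_lt_tailProb (μ : Measure Ω) [IsFiniteMeasure μ] {T : Ω → ℝ}
    (hT : Measurable T) (u : ℝ) :
    Tendsto (fun ε => μ {ω | u - ε < T ω}) (𝓝[>] 0) (𝓝 (tailProb μ T u)) := by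
  have hinter : (⋂ ε > (0 : ℝ), {ω | u - ε < T ω}) = {ω | u ≤ T ω} := by
    ext ω
    simp only [Set.mem_iInter, Set.mem_ofPred_eq, sub_lt_iff_lt_add]
    exact le_iff_forall_pos_lt_add.symm
  rw [tailProb, ← hinter]
  exact tendsto_measure_biInter_gt
    (fun _ _ => (measurableSet_lt measurable_const hT).nullMeasurableSet)
    (fun _ _ _ hij _ hω => by simp only [Set.mem_ofPred_eq] at hω ⊢; linarith)
    ⟨1, one_pos, measure_ne_top μ _⟩

lemma IsDFR.tailProb_mul_le {μ : Measure Ω} [IsFiniteMeasure μ] {T : Ω → ℝ} (hDFR : IsDFR μ T)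
    (hT : Measurable T) {s t x : ℝ} (hs : 0 ≤ s) (hst : s ≤ t) (hx : 0 ≤ x) :
    tailProb μ T (s + x) * tailProb μ T t ≤ tailProb μ T (t + x) * tailProb μ T s := by
  rcases hst.eq_or_lt with rfl | hst
  · rw [mul_comm]
  rcases hx.eq_or_lt with rfl | hx
  · simp only [add_zero, mul_comm, le_rfl]
  have hlim := ENNReal.Tendsto.mul_const (tendsto_measure_sub_lt_tailProb μ hT (t + x))
    (Or.inr (measure_ne_top μ {ω | s ≤ T ω}))
  refine ge_of_tendsto hlim ?_
  filter_upwards [Ioo_mem_nhdsGT (lt_min (sub_pos.2 hst) hx)] with ε ⟨hε, hεst⟩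
  rw [lt_min_iff] at hεst
  -- open tails shifted by `ε / 2` dominate the closed tails, and tend to them as `ε → 0`
  calc tailProb μ T (s + x) * tailProb μ T t
      ≤ μ {ω | s + (x - ε / 2) < T ω} * μ {ω | t - ε / 2 < T ω} :=
        mul_le_mul' (tailProb_le_measure_lt μ T (by linarith))
          (tailProb_le_measure_lt μ T (by linarith))
    _ ≤ μ {ω | t - ε / 2 + (x - ε / 2) < T ω} * μ {ω | s < T ω} :=
        hDFR _ _ _ hs (by linarith) (by linarith)
    _ ≤ μ {ω | t + x - ε < T ω} * tailProb μ T s := by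
        rw [show t - ε / 2 + (x - ε / 2) = t + x - ε by ring]
        exact mul_le_mul' le_rfl (measure_mono fun _ (hω : s < _) => hω.le)

lemma IsDFR.tailProb_sum_range_sq_le {μ : Measure Ω} [IsFiniteMeasure μ] {T : Ω → ℝ}
    (hDFR : IsDFR μ T) (hT : Measurable T) {x : ℕ → ℝ} (hx0 : ∀ i, 0 ≤ x i)
    (hx : Antitone x) (n : ℕ) :
    tailProb μ T (∑ i ∈ Finset.range (n + 1), x i) ^ 2 ≤
      tailProb μ T (∑ i ∈ Finset.range n, x i) *
        tailProb μ T (∑ i ∈ Finset.range (n + 2), x i) := by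
  set a := ∑ i ∈ Finset.range n, x i
  have ha : 0 ≤ a := Finset.sum_nonneg fun i _ => hx0 i
  simp only [Finset.sum_range_succ]
  calc tailProb μ T (a + x n) ^ 2
      ≤ tailProb μ T (a + x (n + 1)) * tailProb μ T (a + x n) := by
        rw [sq]
        exact mul_le_mul' (tailProb_antitone μ T (by linarith [hx n.le_succ])) le_rfl
    _ ≤ tailProb μ T (a + x n + x (n + 1)) * tailProb μ T a :=
        hDFR.tailProb_mul_le hT ha (by linarith [hx0 n]) (hx0 _)
    _ = _ := mul_comm _ _

lemma arr_monotone {α : Type*} {X : ℕ → α → ℝ} (hX : ∀ n a, 0 ≤ X n a) (a : α) :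
    Monotone (fun n => arr X n a) := fun _ _ h =>
  Finset.sum_le_sum_of_subset_of_nonneg (Finset.range_subset_range.2 h) fun i _ _ => hX i a

lemma natCast_le_countN_iff {α : Type*} {X : ℕ → α → ℝ} (hX : ∀ n a, 0 ≤ X n a) {t : ℝ}
    (ht : 0 ≤ t) (a : α) (n : ℕ) : (n : ℕ∞) ≤ countN X t a ↔ arr X n a ≤ t := by
  rcases n with _ | n
  · simpa [arr] using ht
  rw [Nat.cast_succ, ENat.add_one_le_iff (ENat.natCast_ne_top n), countN, lt_sSup_iff]
  constructor
  · rintro ⟨_, ⟨k, hk, rfl⟩, hnk⟩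
    exact (arr_monotone hX a (ENat.natCast_lt_natCast.1 hnk)).trans hk
  · exact fun h => ⟨_, ⟨n + 1, h, rfl⟩, ENat.natCast_lt_natCast.2 n.lt_succ_self⟩

lemma measure_le_eq_lintegral_tailProb {μ : Measure Ω} [IsFiniteMeasure μ] {S T : Ω → ℝ}
    (hS : Measurable S) (hT : Measurable T) (hST : IndepFun T S μ) :
    μ {ω | S ω ≤ T ω} = ∫⁻ ω, tailProb μ T (S ω) ∂μ := by
  have hpair : Measurable fun ω => (T ω, S ω) := hT.prodMk hS
  have hle : MeasurableSet {p : ℝ × ℝ | p.2 ≤ p.1} := measurableSet_le measurable_snd measurable_fst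
  rw [show {ω | S ω ≤ T ω} = (fun ω => (T ω, S ω)) ⁻¹' {p | p.2 ≤ p.1} from rfl,
    ← Measure.map_apply hpair hle,
    (indepFun_iff_map_prod_eq_prod_map_map hT.aemeasurable hS.aemeasurable).1 hST,
    Measure.prod_apply_symm hle, ← lintegral_map (tailProb_antitone μ T).measurable hS]
  exact lintegral_congr fun y => Measure.map_apply hT measurableSet_Ici

theorem isdDFR_countN_of_antitone {μ : Measure Ω} [IsFiniteMeasure μ] {X : ℕ → Ω → ℝ}
    {T : Ω → ℝ} (hX : ∀ n, Measurable (X n)) (hX0 : ∀ n ω, 0 ≤ X n ω)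
    (hXanti : ∀ ω, Antitone fun n => X n ω) (hT : Measurable T) (hT0 : ∀ ω, 0 ≤ T ω)
    (hindep : IndepFun T (fun ω n => X n ω) μ) (hDFR : IsDFR μ T) :
    IsdDFR μ (fun ω => countN X (T ω) ω) := by
  have hcount (m : ℕ) :
      μ {ω | (m : ℕ∞) ≤ countN X (T ω) ω} = ∫⁻ ω, tailProb μ T (arr X m ω) ∂μ := by
    simp only [natCast_le_countN_iff hX0 (hT0 _)]
    refine measure_le_eq_lintegral_tailProb (Finset.measurable_sum _ fun i _ => hX i) hT ?_
    exact hindep.comp measurable_id (Finset.measurable_sum _ fun i _ => measurable_pi_apply i)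
  intro n
  have hmeas (m : ℕ) : AEMeasurable (fun ω => tailProb μ T (arr X m ω)) μ :=
    ((tailProb_antitone μ T).measurable.comp (Finset.measurable_sum _ fun i _ => hX i)).aemeasurable
  rw [← Nat.cast_one, ← Nat.cast_add, ← Nat.cast_two (R := ℕ∞), ← Nat.cast_add, hcount, hcount,
    hcount]
  exact lintegral_sq_le_mul_of_sq_le (hmeas n) (hmeas (n + 2))
    fun ω => hDFR.tailProb_sum_range_sq_le hT (fun i => hX0 i ω) (hXanti ω) n

theorem stmt9_general
    (μ : Measure Ω) [IsProbabilityMeasure μ]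
    (Y : ℕ → Ω → ℝ) (T : Ω → ℝ) (z : ℝ) (hz : 0 < z)
    (hYmeas : ∀ n, Measurable (Y n)) (hYnonneg : ∀ n ω, 0 ≤ Y n ω)
    (hTmeas : Measurable T) (hTnonneg : ∀ ω, 0 ≤ T ω)
    (hindep : IndepFun T (fun ω n => Y n ω) μ)
    (hDFR : IsDFR μ T) :
    IsdDFR μ (fun ω =>
      countN (fun n ω' => (z + ∑ i ∈ Finset.range (n + 1), Y i ω')⁻¹) (T ω) ω) := by
  have hpos (n : ℕ) (ω : Ω) : 0 < z + ∑ i ∈ Finset.range (n + 1), Y i ω :=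
    add_pos_of_pos_of_nonneg hz (Finset.sum_nonneg fun i _ => hYnonneg i ω)
  have hpath : Measurable fun (y : ℕ → ℝ) (n : ℕ) => (z + ∑ i ∈ Finset.range (n + 1), y i)⁻¹ :=
    measurable_pi_lambda _ fun n =>
      (measurable_const.add (Finset.measurable_sum _ fun i _ => measurable_pi_apply i)).inv
  refine isdDFR_countN_of_antitone (fun n => (hpath.comp (measurable_pi_lambda _ hYmeas)).eval)
    (fun n ω => (inv_pos.2 (hpos n ω)).le) (fun ω m n hmn => ?_) hTmeas hTnonneg
    (hindep.comp measurable_id hpath) hDFR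
  refine inv_anti₀ (hpos m ω) (add_le_add_right ?_ z)
  exact Finset.sum_le_sum_of_subset_of_nonneg (Finset.range_subset_range.2 (by omega))
    fun i _ _ => hYnonneg i ω

/-- Let `Y 0, Y 1, …` be independent nonnegative random
variables, let `z > 0`, and define interarrival times
`X n = 1 / (z + Y 0 + ⋯ + Y n)` (mathematically `X_n = 1/(z + Y_1 + ⋯ + Y_n)`),
with counting process `N`. If `T` is a DFR nonnegative random time independent
of the process, then `N(T)` is d-DFR. -/
theorem stmt9
    (μ : Measure Ω) [IsProbabilityMeasure μ]
    (Y : ℕ → Ω → ℝ) (T : Ω → ℝ) (z : ℝ) (hz : 0 < z)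
    (hYmeas : ∀ n, Measurable (Y n)) (hYnonneg : ∀ n ω, 0 ≤ Y n ω)
    (hYindep : iIndepFun Y μ)
    (hTmeas : Measurable T) (hTnonneg : ∀ ω, 0 ≤ T ω)
    (hindep : IndepFun T (fun ω n => Y n ω) μ)
    (hDFR : IsDFR μ T) :
    IsdDFR μ (fun ω =>
      countN (fun n ω' => (z + ∑ i ∈ Finset.range (n + 1), Y i ω')⁻¹) (T ω) ω) :=
  stmt9_general μ Y T z hz hYmeas hYnonneg hTmeas hTnonneg hindep hDFR
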